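/- Fix ε > 0 and let 𝒟_m^{j,j'}(u,s) := D_m(φ^j(u)+φ^{j'}(s)) + D_m(φ^j(u)−φ^{j'}(s)) with D_m(x) = (1/m)Σ_{l=1}^m cos((l−1/2)πx), where φ^j, φ^{j'} : [0,1] → [0,1] satisfy |φ(u) − u| ≤ ρ_n with ρ_n → 0. Then for each fixed s ∈ (ε, 1−ε), sup over u with ε ≤ u ≤ s − ε and u+s ≤ 2 − ε of |𝒟_{m}^{j,j'}(u,s)| ≤ C_ε/m for n large enough, where C_ε depends only on ε. Consequently m ∫_0^{s−ε} |𝒟_{m_n}^{j,j'}(u,s)·𝒟_{m_n}^{k,k'}(u,s)| du → 0 as m_n, n → ∞. -/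

import Mathlib

open Real Finset MeasureTheory

/-- The half-integer-frequency Dirichlet-type kernel
`D_m(x) = (1/m) Σ_{l=1}^m cos((l−1/2)πx)`. -/
noncomputable def Dm (m : ℕ) (x : ℝ) : ℝ :=
  (1 / (m : ℝ)) * ∑ l ∈ Finset.Icc 1 m, Real.cos (((l : ℝ) - 1 / 2) * π * x)

/-- The sampled SIML kernel `𝒟_m^{j,j'}(u,s) = D_m(φ^j(u)+φ^{j'}(s)) + D_m(φ^j(u)−φ^{j'}(s))`. -/
noncomputable def DkerS (m : ℕ) (φ φ' : ℝ → ℝ) (u s : ℝ) : ℝ :=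
  Dm m (φ u + φ' s) + Dm m (φ u - φ' s)

/-!
`2 sin(πx/2) · m D_m(x) = sin(mπx)` telescopes, so `|D_m(x)| ≤ 1 / (2m |sin(πx/2)|)`.
For `0 ≤ u ≤ s − ε` and `ε < s < 1 − ε` the points `(u ± s)/2` stay at distance at least
`ε/2` from the integers; moving `u` and `s` by at most `ε/4` keeps them at distance `ε/4`,
so each kernel is at most `1 / (m sin(πε/4))`. The integrand of the second claim is then
`O(m⁻²)` on an interval of fixed length.
-/

open Filter Topology

lemma two_mul_sin_half_mul_sum_cos (θ : ℝ) (m : ℕ) :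
    2 * sin (θ / 2) * ∑ l ∈ Finset.Icc 1 m, cos (((l : ℝ) - 1 / 2) * θ) = sin (m * θ) := by
  induction m with
  | zero => simp
  | succ k ih =>
    have telescope : sin ((k + 1) * θ) - sin (k * θ)
        = 2 * sin (θ / 2) * cos ((k + 1 - 1 / 2) * θ) := by
      have e₁ : (k + 1) * θ = (k + 1 - 1 / 2) * θ + θ / 2 := by ring
      have e₂ : k * θ = (k + 1 - 1 / 2) * θ - θ / 2 := by ring
      rw [e₁, e₂, sin_add, sin_sub]
      ring
    rw [Finset.sum_Icc_succ_top (by omega), mul_add, ih]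
    push_cast
    linarith

lemma two_mul_mul_sin_mul_Dm (m : ℕ) (x : ℝ) :
    2 * m * sin (π * x / 2) * Dm m x = sin (m * (π * x)) := by
  rcases Nat.eq_zero_or_pos m with rfl | hm
  · simp
  rw [← two_mul_sin_half_mul_sum_cos, Dm]
  simp only [mul_assoc _ π x]
  field_simp

lemma Dm_abs (m : ℕ) (x : ℝ) : Dm m |x| = Dm m x := by
  rcases abs_choice x with h | h <;> simp [h, Dm, mul_neg]

lemma abs_Dm_le_of_le_abs_sin {m : ℕ} {x c : ℝ} (hc : 0 < c) (hx : c ≤ |sin (π * x / 2)|) :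
    |Dm m x| ≤ 1 / (2 * m * c) := by
  rcases Nat.eq_zero_or_pos m with rfl | hm
  · simp [Dm]
  rw [le_div_iff₀ (by positivity)]
  calc |Dm m x| * (2 * m * c) ≤ |Dm m x| * (2 * m * |sin (π * x / 2)|) := by gcongr
    _ = |sin (m * (π * x))| := by
        rw [← two_mul_mul_sin_mul_Dm, abs_mul, abs_mul, abs_mul, abs_two, Nat.abs_cast]
        ring
    _ ≤ 1 := abs_sin_le_one _

lemma sin_pi_mul_le_sin_pi_mul {δ y : ℝ} (hδ : 0 ≤ δ) (hy : y ∈ Set.Icc δ (1 - δ)) :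
    sin (π * δ) ≤ sin (π * y) := by
  have hδ₁ : δ ≤ 1 - δ := hy.1.trans hy.2
  have hmem : ∀ t ∈ Set.Icc 0 1, π * t ∈ Set.Icc 0 π := fun t ht =>
    ⟨by nlinarith [pi_pos, ht.1], by nlinarith [pi_pos, ht.2]⟩
  have hmin := strictConcaveOn_sin_Icc.concaveOn.min_le_of_mem_Icc
    (hmem δ ⟨hδ, by linarith⟩) (hmem (1 - δ) ⟨by linarith, by linarith⟩)
    (z := π * y) ⟨by nlinarith [pi_pos, hy.1], by nlinarith [pi_pos, hy.2]⟩
  rwa [show π * (1 - δ) = π - π * δ by ring, sin_pi_sub, min_self] at hmin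

lemma abs_Dm_le_of_half_abs_mem_Icc {m : ℕ} {x δ : ℝ} (hδ : 0 < δ)
    (hx : |x| / 2 ∈ Set.Icc δ (1 - δ)) : |Dm m x| ≤ 1 / (2 * m * sin (π * δ)) := by
  have hsin : 0 < sin (π * δ) :=
    sin_pos_of_pos_of_lt_pi (by positivity) (by nlinarith [pi_pos, hx.1.trans hx.2])
  rw [← Dm_abs]
  refine abs_Dm_le_of_le_abs_sin hsin ?_
  calc sin (π * δ) ≤ sin (π * (|x| / 2)) := sin_pi_mul_le_sin_pi_mul hδ.le hx
    _ ≤ |sin (π * |x| / 2)| := by rw [mul_div_assoc]; exact le_abs_self _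

lemma abs_DkerS_le {m : ℕ} {φ φ' : ℝ → ℝ} {u s δ : ℝ} (hδ : 0 < δ)
    (hadd : |φ u + φ' s| / 2 ∈ Set.Icc δ (1 - δ)) (hsub : |φ u - φ' s| / 2 ∈ Set.Icc δ (1 - δ)) :
    |DkerS m φ φ' u s| ≤ 1 / sin (π * δ) / m :=
  calc |DkerS m φ φ' u s| ≤ |Dm m (φ u + φ' s)| + |Dm m (φ u - φ' s)| := abs_add_le _ _
    _ ≤ 1 / (2 * m * sin (π * δ)) + 1 / (2 * m * sin (π * δ)) :=
        add_le_add (abs_Dm_le_of_half_abs_mem_Icc hδ hadd) (abs_Dm_le_of_half_abs_mem_Icc hδ hsub)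
    _ = 1 / sin (π * δ) / m := by ring

lemma half_abs_add_sub_mem_Icc {ε s u a b : ℝ} (hε : 0 < ε) (hs : s ∈ Set.Ioo ε (1 - ε))
    (hu : u ∈ Set.Icc 0 (s - ε)) (ha : |a - u| ≤ ε / 4) (hb : |b - s| ≤ ε / 4) :
    |a + b| / 2 ∈ Set.Icc (ε / 4) (1 - ε / 4) ∧ |a - b| / 2 ∈ Set.Icc (ε / 4) (1 - ε / 4) := by
  obtain ⟨hs₁, hs₂⟩ := hs
  obtain ⟨hu₁, hu₂⟩ := hu
  obtain ⟨ha₁, ha₂⟩ := abs_le.mp ha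
  obtain ⟨hb₁, hb₂⟩ := abs_le.mp hb
  rw [abs_of_pos (by linarith : 0 < a + b), abs_of_neg (by linarith : a - b < 0)]
  exact ⟨⟨by linarith, by linarith⟩, ⟨by linarith, by linarith⟩⟩

lemma abs_DkerS_le_of_close {m : ℕ} {φ φ' : ℝ → ℝ} {ε s u : ℝ} (hε : 0 < ε)
    (hs : s ∈ Set.Ioo ε (1 - ε)) (hu : u ∈ Set.Icc 0 (s - ε))
    (hφ : |φ u - u| ≤ ε / 4) (hφ' : |φ' s - s| ≤ ε / 4) :
    |DkerS m φ φ' u s| ≤ 1 / sin (π * (ε / 4)) / m :=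
  have h := half_abs_add_sub_mem_Icc hε hs hu hφ hφ'
  abs_DkerS_le (by positivity) h.1 h.2

lemma tendsto_natCast_mul_integral_abs {F : ℕ → ℝ → ℝ} {m : ℕ → ℕ}
    (hm : Tendsto m atTop atTop) {b C : ℝ} (hb : 0 ≤ b)
    (hF : ∀ᶠ n in atTop, ∀ u ∈ Set.Ioc 0 b, |F n u| ≤ (C / m n) ^ 2) :
    Tendsto (fun n => (m n : ℝ) * ∫ u in (0 : ℝ)..b, |F n u|) atTop (𝓝 0) := by
  have hlim : Tendsto (fun n => C ^ 2 * b / m n) atTop (𝓝 0) :=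
    tendsto_const_nhds.div_atTop (tendsto_natCast_atTop_atTop.comp hm)
  refine squeeze_zero' (Eventually.of_forall fun n => mul_nonneg (Nat.cast_nonneg _)
    (intervalIntegral.integral_nonneg hb fun u _ => abs_nonneg _)) ?_ hlim
  filter_upwards [hF, hm.eventually_gt_atTop 0] with n hn hpos
  have hint : ∫ u in (0 : ℝ)..b, |F n u| ≤ (C / m n) ^ 2 * b := by
    have h := intervalIntegral.norm_integral_le_of_norm_le_const (a := 0) (b := b)
      (f := fun u => |F n u|) (C := (C / m n) ^ 2)
      (fun u hu => by rw [Set.uIoc_of_le hb] at hu; simpa using hn u hu)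
    rw [sub_zero, abs_of_nonneg hb] at h
    exact (le_abs_self _).trans h
  calc (m n : ℝ) * ∫ u in (0 : ℝ)..b, |F n u| ≤ m n * ((C / m n) ^ 2 * b) := by gcongr
    _ = C ^ 2 * b / m n := by field_simp

theorem stmt19_general (ε : ℝ) (hε : 0 < ε)
    (ρ : ℕ → ℝ) (hρ : Filter.Tendsto ρ Filter.atTop (nhds 0))
    (m : ℕ → ℕ) (hm : Filter.Tendsto m Filter.atTop Filter.atTop)
    (φj φj' φk φk' : ℕ → ℝ → ℝ)
    (hclose : ∀ n, ∀ u ∈ Set.Icc (0:ℝ) 1,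
      |φj n u - u| ≤ ρ n ∧ |φj' n u - u| ≤ ρ n ∧
      |φk n u - u| ≤ ρ n ∧ |φk' n u - u| ≤ ρ n) :
    (∃ C : ℝ, 0 < C ∧ ∀ s ∈ Set.Ioo ε (1 - ε), ∃ N : ℕ, ∀ n, N ≤ n →
      ∀ u : ℝ, ε ≤ u → u ≤ s - ε → u + s ≤ 2 - ε →
        |DkerS (m n) (φj n) (φj' n) u s| ≤ C / (m n)) ∧
    (∀ s ∈ Set.Ioo ε (1 - ε),
      Filter.Tendsto
        (fun n => (m n : ℝ) * ∫ u in (0:ℝ)..(s - ε),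
          |DkerS (m n) (φj n) (φj' n) u s * DkerS (m n) (φk n) (φk' n) u s|)
        Filter.atTop (nhds 0)) := by
  set C := 1 / sin (π * (ε / 4))
  have hbound : ∀ᶠ n in atTop, ∀ s ∈ Set.Ioo ε (1 - ε), ∀ u ∈ Set.Icc 0 (s - ε),
      |DkerS (m n) (φj n) (φj' n) u s| ≤ C / m n ∧
      |DkerS (m n) (φk n) (φk' n) u s| ≤ C / m n := by
    filter_upwards [hρ.eventually (ge_mem_nhds (by positivity : (0 : ℝ) < ε / 4))]
      with n hn s hs u hu
    obtain ⟨hj, -, hk, -⟩ := hclose n u ⟨hu.1, by linarith [hu.2, hs.2]⟩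
    obtain ⟨-, hj', -, hk'⟩ := hclose n s ⟨by linarith [hs.1], by linarith [hs.2]⟩
    exact ⟨abs_DkerS_le_of_close hε hs hu (hj.trans hn) (hj'.trans hn),
      abs_DkerS_le_of_close hε hs hu (hk.trans hn) (hk'.trans hn)⟩
  constructor
  · -- `C` itself need not be positive when `ε ≥ 4`, where the claim is vacuous.
    refine ⟨max C 1, lt_max_of_lt_right one_pos, fun s hs => ?_⟩
    obtain ⟨N, hN⟩ := eventually_atTop.mp hbound
    refine ⟨N, fun n hn u hu₁ hu₂ _ => (hN n hn s hs u ⟨by linarith, hu₂⟩).1.trans ?_⟩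
    gcongr
    exact le_max_left _ _
  · intro s hs
    refine tendsto_natCast_mul_integral_abs hm (C := C) (by linarith [hs.1]) ?_
    filter_upwards [hbound] with n hn u hu
    obtain ⟨hj, hk⟩ := hn s hs u (Set.Ioc_subset_Icc_self hu)
    rw [abs_mul, sq]
    exact mul_le_mul hj hk (abs_nonneg _) ((abs_nonneg _).trans hj)

theorem stmt19 (ε : ℝ) (hε : 0 < ε)
    (ρ : ℕ → ℝ) (hρ : Filter.Tendsto ρ Filter.atTop (nhds 0))
    (m : ℕ → ℕ) (hm : Filter.Tendsto m Filter.atTop Filter.atTop)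
    (φj φj' φk φk' : ℕ → ℝ → ℝ)
    (hmeas : ∀ n, Measurable (φj n) ∧ Measurable (φj' n) ∧
      Measurable (φk n) ∧ Measurable (φk' n))
    (hmaps : ∀ n, ∀ u ∈ Set.Icc (0:ℝ) 1,
      φj n u ∈ Set.Icc (0:ℝ) 1 ∧ φj' n u ∈ Set.Icc (0:ℝ) 1 ∧
      φk n u ∈ Set.Icc (0:ℝ) 1 ∧ φk' n u ∈ Set.Icc (0:ℝ) 1)
    (hclose : ∀ n, ∀ u ∈ Set.Icc (0:ℝ) 1,
      |φj n u - u| ≤ ρ n ∧ |φj' n u - u| ≤ ρ n ∧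
      |φk n u - u| ≤ ρ n ∧ |φk' n u - u| ≤ ρ n) :
    (∃ C : ℝ, 0 < C ∧ ∀ s ∈ Set.Ioo ε (1 - ε), ∃ N : ℕ, ∀ n, N ≤ n →
      ∀ u : ℝ, ε ≤ u → u ≤ s - ε → u + s ≤ 2 - ε →
        |DkerS (m n) (φj n) (φj' n) u s| ≤ C / (m n)) ∧
    (∀ s ∈ Set.Ioo ε (1 - ε),
      Filter.Tendsto
        (fun n => (m n : ℝ) * ∫ u in (0:ℝ)..(s - ε),
          |DkerS (m n) (φj n) (φj' n) u s * DkerS (m n) (φk n) (φk' n) u s|)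
        Filter.atTop (nhds 0)) :=
  stmt19_general ε hε ρ hρ m hm φj φj' φk φk' hclose
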